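/- Let X be an exponentially distributed random variable with rate μ > 0. Define g(σ) = E[ Q( X / (σ√2) ) ] for σ > 0. Then lim_{σ→0⁺} (log g(σ)) / (log σ) = 1; that is, the probability of selecting a wrong relay due to channel-estimation noise of standard deviation σ decays linearly in σ on the exponential scale as σ → 0. -/

import Mathlib

open MeasureTheory Real Filter Topology

noncomputable def gaussQ (x : ℝ) : ℝ :=
  ∫ t in Set.Ioi x, (Real.sqrt (2 * Real.pi))⁻¹ * Real.exp (-t ^ 2 / 2)

lemma integrable_phi :
    Integrable (fun t : ℝ => (Real.sqrt (2 * Real.pi))⁻¹ * Real.exp (-t ^ 2 / 2)) := by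
  have h : Integrable (fun t : ℝ => Real.exp (-(1/2 : ℝ) * t ^ 2)) :=
    integrable_exp_neg_mul_sq (by norm_num)
  have := h.const_mul (Real.sqrt (2 * Real.pi))⁻¹
  convert this using 2 with t
  ring_nf

lemma phi_nonneg (t : ℝ) : 0 ≤ (Real.sqrt (2 * Real.pi))⁻¹ * Real.exp (-t ^ 2 / 2) :=
  mul_nonneg (inv_nonneg.2 (Real.sqrt_nonneg _)) (Real.exp_pos _).le

lemma gaussQ_nonneg (x : ℝ) : 0 ≤ gaussQ x :=
  setIntegral_nonneg measurableSet_Ioi fun t _ => phi_nonneg t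

lemma gaussQ_antitone : Antitone gaussQ := by
  intro x y hxy
  exact setIntegral_mono_set integrable_phi.integrableOn
    (Eventually.of_forall fun t => phi_nonneg t)
    (HasSubset.Subset.eventuallyLE (Set.Ioi_subset_Ioi hxy))

lemma integral_phi : ∫ t : ℝ, (Real.sqrt (2 * Real.pi))⁻¹ * Real.exp (-t ^ 2 / 2) = 1 := by
  rw [MeasureTheory.integral_const_mul]
  have : (fun t : ℝ => Real.exp (-t ^ 2 / 2)) = fun t : ℝ => Real.exp (-(1/2 : ℝ) * t ^ 2) := by
    funext t; ring_nf
  rw [this, integral_gaussian]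
  rw [show (π / (1/2 : ℝ)) = 2 * π by ring]
  rw [inv_mul_cancel₀]
  positivity

lemma gaussQ_le_one (x : ℝ) : gaussQ x ≤ 1 := by
  rw [← integral_phi]
  exact setIntegral_le_integral integrable_phi (Eventually.of_forall fun t => phi_nonneg t)

lemma gaussQ_one_pos : 0 < gaussQ 1 := by
  rw [gaussQ, setIntegral_pos_iff_support_of_nonneg_ae
    (Eventually.of_forall fun t => phi_nonneg t) integrable_phi.integrableOn]
  have hs : (Function.support fun t : ℝ => (Real.sqrt (2 * Real.pi))⁻¹ * Real.exp (-t ^ 2 / 2))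
      = Set.univ := by
    ext t
    simp [Function.mem_support]
    exact (Real.sqrt_pos.2 pi_pos).ne'
  rw [hs, Set.univ_inter, Real.volume_Ioi]
  exact ENNReal.zero_lt_top


lemma texp_eq : (fun t : ℝ => t * Real.exp (-t ^ 2 / 2))
    = fun t : ℝ => t * Real.exp (-(1/2 : ℝ) * t ^ 2) := by
  funext t; ring_nf

lemma integrableOn_texp (y : ℝ) :
    IntegrableOn (fun t : ℝ => t * Real.exp (-t ^ 2 / 2)) (Set.Ioi y) := by
  rw [texp_eq]
  exact (integrable_mul_exp_neg_mul_sq (by norm_num : (0:ℝ) < 1/2)).integrableOn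

lemma integral_texp (y : ℝ) :
    ∫ t in Set.Ioi y, t * Real.exp (-t ^ 2 / 2) = Real.exp (-y ^ 2 / 2) := by
  have hderiv : ∀ x ∈ Set.Ioi y,
      HasDerivAt (fun t : ℝ => -Real.exp (-t ^ 2 / 2)) (x * Real.exp (-x ^ 2 / 2)) x := by
    intro x _
    have h1 : HasDerivAt (fun t : ℝ => -t ^ 2 / 2) (-x) x := by
      have := (hasDerivAt_pow 2 x).neg.div_const 2
      refine this.congr_deriv ?_
      norm_num; ring
    have := (h1.exp).neg
    exact this.congr_deriv (by ring)
  have htend : Tendsto (fun t : ℝ => -Real.exp (-t ^ 2 / 2)) atTop (𝓝 0) := by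
    have h2 : Tendsto (fun t : ℝ => -t ^ 2 / 2) atTop atBot := by
      have h3 : Tendsto (fun t : ℝ => t ^ 2 / 2) atTop atTop :=
        (tendsto_pow_atTop two_ne_zero).atTop_div_const (by norm_num)
      have := tendsto_neg_atTop_atBot.comp h3
      convert this using 2 with t
      simp [Function.comp]; ring
    have := (Real.tendsto_exp_atBot.comp h2).neg
    simpa using this
  have := integral_Ioi_of_hasDerivAt_of_tendsto
    ((Continuous.continuousWithinAt (by fun_prop))) hderiv (integrableOn_texp y) htend
  simpa using this

lemma gaussQ_le_phi0 {y : ℝ} (hy : 1 ≤ y) :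
    gaussQ y
      ≤ (Real.sqrt (2 * Real.pi))⁻¹ * Real.exp (-y ^ 2 / 2) := by
  rw [gaussQ, ← integral_texp y, ← MeasureTheory.integral_const_mul]
  apply setIntegral_mono_on ?_ ((integrableOn_texp y).const_mul _) measurableSet_Ioi
  · intro t ht
    have ht1 : 1 ≤ t := hy.trans (le_of_lt ht)
    exact mul_le_mul_of_nonneg_left (le_mul_of_one_le_left (Real.exp_pos _).le ht1)
      (inv_nonneg.2 (Real.sqrt_nonneg _))
  · have h : Integrable (fun t : ℝ => Real.exp (-(1/2 : ℝ) * t ^ 2)) :=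
      integrable_exp_neg_mul_sq (by norm_num)
    have := (h.const_mul (Real.sqrt (2 * Real.pi))⁻¹).integrableOn (s := Set.Ioi y)
    refine this.congr_fun ?_ measurableSet_Ioi
    intro t _; ring_nf

section
variable {μ σ : ℝ}

lemma f_nonneg (hμ : 0 < μ) (x : ℝ) :
    0 ≤ gaussQ (x / (σ * Real.sqrt 2)) * (μ * Real.exp (-μ * x)) :=
  mul_nonneg (gaussQ_nonneg _) (by positivity)

lemma integrableOn_f (hμ : 0 < μ) :
    IntegrableOn (fun x => gaussQ (x / (σ * Real.sqrt 2)) * (μ * Real.exp (-μ * x)))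
      (Set.Ioi (0:ℝ)) := by
  have hmeas : Measurable fun x : ℝ =>
      gaussQ (x / (σ * Real.sqrt 2)) * (μ * Real.exp (-μ * x)) := by
    exact (gaussQ_antitone.measurable.comp (measurable_id.div_const _)).mul
      (measurable_const.mul ((measurable_id.const_mul (-μ)).exp))
  refine Integrable.mono' ((exp_neg_integrableOn_Ioi 0 hμ).const_mul μ)
    hmeas.aestronglyMeasurable.restrict (Eventually.of_forall fun x => ?_)
  rw [Real.norm_eq_abs, abs_of_nonneg (f_nonneg hμ x)]
  calc gaussQ (x / (σ * Real.sqrt 2)) * (μ * Real.exp (-μ * x))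
      ≤ 1 * (μ * Real.exp (-μ * x)) :=
        mul_le_mul_of_nonneg_right (gaussQ_le_one _) (by positivity)
    _ = μ * Real.exp (-μ * x) := one_mul _

lemma lower_bound (hμ : 0 < μ) (hσ0 : 0 < σ) (hσ1 : σ ≤ 1) :
    gaussQ 1 * (μ * Real.exp (-μ * Real.sqrt 2)) * Real.sqrt 2 * σ ≤
      ∫ x in Set.Ioi (0:ℝ), gaussQ (x / (σ * Real.sqrt 2)) * (μ * Real.exp (-μ * x)) := by
  set a := σ * Real.sqrt 2 with ha
  have ha0 : 0 < a := by positivity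
  have h1 : ∫ x in Set.Ioc (0:ℝ) a, gaussQ (x / a) * (μ * Real.exp (-μ * x)) ≤
      ∫ x in Set.Ioi (0:ℝ), gaussQ (x / a) * (μ * Real.exp (-μ * x)) :=
    setIntegral_mono_set (integrableOn_f hμ) (Eventually.of_forall fun x => f_nonneg hμ x)
      (HasSubset.Subset.eventuallyLE Set.Ioc_subset_Ioi_self)
  refine le_trans ?_ h1
  have h2 : ∫ x in Set.Ioc (0:ℝ) a, gaussQ 1 * (μ * Real.exp (-μ * Real.sqrt 2)) ≤
      ∫ x in Set.Ioc (0:ℝ) a, gaussQ (x / a) * (μ * Real.exp (-μ * x)) := by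
    refine setIntegral_mono_on (integrableOn_const measure_Ioc_lt_top.ne)
      ((integrableOn_f hμ).mono_set Set.Ioc_subset_Ioi_self) measurableSet_Ioc ?_
    intro x hx
    have hxa : x / a ≤ 1 := (div_le_one ha0).2 hx.2
    have hx2 : x ≤ Real.sqrt 2 := hx.2.trans (by
      calc a = σ * Real.sqrt 2 := ha
        _ ≤ 1 * Real.sqrt 2 := by gcongr
        _ = Real.sqrt 2 := one_mul _)
    refine mul_le_mul (gaussQ_antitone hxa) ?_ (by positivity) (gaussQ_nonneg _)
    refine mul_le_mul_of_nonneg_left (Real.exp_le_exp.2 ?_) hμ.le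
    nlinarith
  refine le_trans (le_of_eq ?_) h2
  rw [setIntegral_const, measureReal_def, Real.volume_Ioc, smul_eq_mul,
    ENNReal.toReal_ofReal (by linarith : (0:ℝ) ≤ a - 0)]
  ring

lemma upper_bound (hμ : 0 < μ) (hσ0 : 0 < σ) :
    ∫ x in Set.Ioi (0:ℝ), gaussQ (x / (σ * Real.sqrt 2)) * (μ * Real.exp (-μ * x)) ≤
      (μ * Real.sqrt 2 + μ * ((Real.sqrt (2 * Real.pi))⁻¹ * (2 * Real.sqrt Real.pi))) * σ := by
  set a := σ * Real.sqrt 2 with ha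
  have ha0 : 0 < a := by positivity
  have hsplit : (Set.Ioc (0:ℝ) a) ∪ (Set.Ioi a) = Set.Ioi (0:ℝ) :=
    Set.Ioc_union_Ioi_eq_Ioi ha0.le
  have hdisj : Disjoint (Set.Ioc (0:ℝ) a) (Set.Ioi a) := Set.Ioc_disjoint_Ioi le_rfl
  rw [← hsplit, setIntegral_union hdisj measurableSet_Ioi
    ((integrableOn_f hμ).mono_set Set.Ioc_subset_Ioi_self)
    ((integrableOn_f hμ).mono_set (hsplit ▸ Set.Ioi_subset_Ioi ha0.le))]
  have hb : (0:ℝ) < 1 / (4 * σ ^ 2) := by positivity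
  have part1 : ∫ x in Set.Ioc (0:ℝ) a, gaussQ (x / a) * (μ * Real.exp (-μ * x)) ≤ μ * a := by
    have : ∫ x in Set.Ioc (0:ℝ) a, gaussQ (x / a) * (μ * Real.exp (-μ * x)) ≤
        ∫ _x in Set.Ioc (0:ℝ) a, μ := by
      refine setIntegral_mono_on ((integrableOn_f hμ).mono_set Set.Ioc_subset_Ioi_self)
        (integrableOn_const measure_Ioc_lt_top.ne) measurableSet_Ioc ?_
      intro x hx
      calc gaussQ (x / a) * (μ * Real.exp (-μ * x))
          ≤ 1 * (μ * 1) := by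
            refine mul_le_mul (gaussQ_le_one _) ?_ (by positivity) zero_le_one
            refine mul_le_mul_of_nonneg_left (Real.exp_le_one_iff.2 ?_) hμ.le
            nlinarith [hx.1]
        _ = μ := by ring
    refine this.trans (le_of_eq ?_)
    rw [setIntegral_const, measureReal_def, Real.volume_Ioc, smul_eq_mul,
      ENNReal.toReal_ofReal (by linarith : (0:ℝ) ≤ a - 0)]
    ring
  have part2 : ∫ x in Set.Ioi a, gaussQ (x / a) * (μ * Real.exp (-μ * x)) ≤
      μ * ((Real.sqrt (2 * Real.pi))⁻¹ * (2 * Real.sqrt Real.pi * σ)) := by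
    have hptw : ∀ x ∈ Set.Ioi a, gaussQ (x / a) * (μ * Real.exp (-μ * x)) ≤
        μ * ((Real.sqrt (2 * Real.pi))⁻¹ * Real.exp (-(1/(4*σ^2)) * x ^ 2)) := by
      intro x hx
      have hx1 : 1 ≤ x / a := (one_le_div ha0).2 (le_of_lt hx)
      have harg : -(x / a) ^ 2 / 2 = -(1/(4*σ^2)) * x ^ 2 := by
        rw [ha, div_pow, mul_pow, Real.sq_sqrt (by norm_num : (0:ℝ) ≤ 2)]
        field_simp
        ring_nf
      have hQ : gaussQ (x / a) ≤ (Real.sqrt (2 * Real.pi))⁻¹ *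
          Real.exp (-(1/(4*σ^2)) * x ^ 2) := by
        have := gaussQ_le_phi0 hx1
        rwa [harg] at this
      calc gaussQ (x / a) * (μ * Real.exp (-μ * x))
          ≤ ((Real.sqrt (2 * Real.pi))⁻¹ * Real.exp (-(1/(4*σ^2)) * x ^ 2)) * (μ * 1) := by
            refine mul_le_mul hQ ?_ (by positivity) (by positivity)
            refine mul_le_mul_of_nonneg_left (Real.exp_le_one_iff.2 (by nlinarith [ha0.trans hx])) hμ.le
        _ = μ * ((Real.sqrt (2 * Real.pi))⁻¹ * Real.exp (-(1/(4*σ^2)) * x ^ 2)) := by ring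
    have hint : Integrable (fun x : ℝ =>
        μ * ((Real.sqrt (2 * Real.pi))⁻¹ * Real.exp (-(1/(4*σ^2)) * x ^ 2))) :=
      ((integrable_exp_neg_mul_sq hb).const_mul _).const_mul μ
    have h3 : ∫ x in Set.Ioi a, gaussQ (x / a) * (μ * Real.exp (-μ * x)) ≤
        ∫ x in Set.Ioi a, μ * ((Real.sqrt (2 * Real.pi))⁻¹ * Real.exp (-(1/(4*σ^2)) * x ^ 2)) :=
      setIntegral_mono_on ((integrableOn_f hμ).mono_set (hsplit ▸ Set.Ioi_subset_Ioi ha0.le))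
        hint.integrableOn measurableSet_Ioi hptw
    have h4 : ∫ x in Set.Ioi a, μ * ((Real.sqrt (2 * Real.pi))⁻¹ *
        Real.exp (-(1/(4*σ^2)) * x ^ 2)) ≤
        ∫ x : ℝ, μ * ((Real.sqrt (2 * Real.pi))⁻¹ * Real.exp (-(1/(4*σ^2)) * x ^ 2)) :=
      setIntegral_le_integral hint (Eventually.of_forall fun x => by positivity)
    have h5 : ∫ x : ℝ, μ * ((Real.sqrt (2 * Real.pi))⁻¹ * Real.exp (-(1/(4*σ^2)) * x ^ 2)) =
        μ * ((Real.sqrt (2 * Real.pi))⁻¹ * (2 * Real.sqrt Real.pi * σ)) := by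
      rw [MeasureTheory.integral_const_mul, MeasureTheory.integral_const_mul, integral_gaussian]
      congr 2
      have : Real.pi / (1/(4*σ^2)) = (2*σ)^2 * Real.pi := by
        field_simp; ring
      rw [this, Real.sqrt_mul (sq_nonneg _), Real.sqrt_sq (by positivity : (0:ℝ) ≤ 2*σ)]
      ring
    exact h3.trans (h4.trans_eq h5)
  calc _ ≤ μ * a + μ * ((Real.sqrt (2 * Real.pi))⁻¹ * (2 * Real.sqrt Real.pi * σ)) :=
        add_le_add part1 part2
    _ = (μ * Real.sqrt 2 + μ * ((Real.sqrt (2 * Real.pi))⁻¹ * (2 * Real.sqrt Real.pi))) * σ := by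
        rw [ha]; ring
end


lemma gaussQ_le_phi {y : ℝ} (hy : 1 ≤ y) :
    gaussQ y ≤ (Real.sqrt (2 * Real.pi))⁻¹ * Real.exp (-y ^ 2 / 2) :=
  gaussQ_le_phi0 hy

lemma tendsto_aux (c : ℝ) (hc : 0 < c) :
    Tendsto (fun σ : ℝ => (Real.log c + Real.log σ) / Real.log σ)
      (nhdsWithin 0 (Set.Ioi 0)) (𝓝 1) := by
  have h0 : Tendsto Real.log (nhdsWithin (0:ℝ) (Set.Ioi 0)) atBot :=
    Real.tendsto_log_nhdsGT_zero
  have hn : Tendsto (fun σ : ℝ => -Real.log σ) (nhdsWithin (0:ℝ) (Set.Ioi 0)) atTop :=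
    tendsto_neg_atBot_atTop.comp h0
  have h1 : Tendsto (fun σ : ℝ => (Real.log σ)⁻¹) (nhdsWithin (0:ℝ) (Set.Ioi 0)) (𝓝 0) := by
    have := hn.inv_tendsto_atTop.neg
    simpa [inv_neg] using this
  have h2 : Tendsto (fun σ : ℝ => Real.log c * (Real.log σ)⁻¹ + 1)
      (nhdsWithin (0:ℝ) (Set.Ioi 0)) (𝓝 1) := by
    have := (h1.const_mul (Real.log c)).add_const 1
    simpa using this
  refine Tendsto.congr' ?_ h2
  filter_upwards [Ioo_mem_nhdsGT_of_mem (Set.mem_Ico.2 ⟨le_rfl, one_pos⟩)] with σ hσ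
  have hlog : Real.log σ ≠ 0 := (Real.log_neg hσ.1 hσ.2).ne
  rw [add_div, div_self hlog, div_eq_mul_inv]

/-- Let `X` be exponentially distributed with rate `μ > 0` and define
`g(σ) = E[Q(X/(σ√2))] = ∫_0^∞ Q(x/(σ√2)) μ e^{−μx} dx` for `σ > 0`.  Then
`lim_{σ→0⁺} (log g(σ))/(log σ) = 1`: the wrong-relay probability decays
linearly in `σ` on the exponential scale. -/
theorem wrong_relay_probability_order (μ : ℝ) (hμ : 0 < μ) :
    Tendsto
      (fun σ : ℝ =>
        Real.log (∫ x in Set.Ioi (0 : ℝ),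
            gaussQ (x / (σ * Real.sqrt 2)) * (μ * Real.exp (-μ * x))) / Real.log σ)
      (nhdsWithin 0 (Set.Ioi 0)) (nhds 1) := by
  have hc1 : 0 < gaussQ 1 * (μ * Real.exp (-μ * Real.sqrt 2)) * Real.sqrt 2 :=
    mul_pos (mul_pos gaussQ_one_pos (by positivity)) (by positivity)
  have hc2 : 0 < μ * Real.sqrt 2 + μ * ((Real.sqrt (2 * Real.pi))⁻¹ * (2 * Real.sqrt Real.pi)) :=
    add_pos_of_pos_of_nonneg (mul_pos hμ (by positivity)) (mul_nonneg hμ.le (by positivity))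
  set c1 := gaussQ 1 * (μ * Real.exp (-μ * Real.sqrt 2)) * Real.sqrt 2 with hc1def
  set c2 := μ * Real.sqrt 2 + μ * ((Real.sqrt (2 * Real.pi))⁻¹ * (2 * Real.sqrt Real.pi))
    with hc2def
  refine tendsto_of_tendsto_of_tendsto_of_le_of_le' (tendsto_aux c2 hc2) (tendsto_aux c1 hc1)
    ?_ ?_ <;>
  · filter_upwards [Ioo_mem_nhdsGT_of_mem (Set.mem_Ico.2 ⟨le_rfl, one_pos⟩)] with σ hσ
    obtain ⟨hσ0, hσ1⟩ := hσ
    have hlow := lower_bound hμ hσ0 hσ1.le (μ := μ)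
    have hup := upper_bound hμ hσ0 (μ := μ)
    set g := ∫ x in Set.Ioi (0:ℝ), gaussQ (x / (σ * Real.sqrt 2)) * (μ * Real.exp (-μ * x))
      with hgdef
    have hgpos : 0 < g := lt_of_lt_of_le (mul_pos hc1 hσ0) hlow
    have hlogσ : Real.log σ < 0 := Real.log_neg hσ0 hσ1
    first
    | · -- lower squeeze: (log c2 + log σ)/log σ ≤ log g / log σ
        refine (div_le_div_right_of_neg hlogσ).2 ?_
        calc Real.log g ≤ Real.log (c2 * σ) :=
              Real.log_le_log hgpos hup
          _ = Real.log c2 + Real.log σ := Real.log_mul hc2.ne' hσ0.ne'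
    | · -- upper squeeze
        refine (div_le_div_right_of_neg hlogσ).2 ?_
        calc Real.log c1 + Real.log σ = Real.log (c1 * σ) :=
              (Real.log_mul hc1.ne' hσ0.ne').symm
          _ ≤ Real.log g := Real.log_le_log (mul_pos hc1 hσ0) hlow
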